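/- Let ξ_{AB} be a Hermitian matrix on A⊗B and σ_A a full-rank density matrix on A with dim B = d. Then ‖ξ_{AB}‖₁ ≤ √d · ‖σ_A^{-1/4} ξ_{AB} σ_A^{-1/4}‖₂, where ‖·‖₂ is the Hilbert–Schmidt norm. -/

import Mathlib

open Matrix Kronecker
open scoped ComplexOrder

/-- `√(M Mᴴ)`, the positive semidefinite absolute value of a matrix. -/
noncomputable def absM {n : Type*} [Fintype n] [DecidableEq n] (M : Matrix n n ℂ) :
    Matrix n n ℂ :=
  ((Matrix.posSemidef_self_mul_conjTranspose M).1.eigenvectorUnitary : Matrix n n ℂ) *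
    Matrix.diagonal ((↑) ∘ (√·) ∘ (Matrix.posSemidef_self_mul_conjTranspose M).1.eigenvalues) *
    (star (Matrix.posSemidef_self_mul_conjTranspose M).1.eigenvectorUnitary : Matrix n n ℂ)

/-- The trace norm `‖M‖₁ = Tr √(M Mᴴ)`. -/
noncomputable def traceNorm {n : Type*} [Fintype n] [DecidableEq n] (M : Matrix n n ℂ) : ℝ :=
  (absM M).trace.re

/-- The Hilbert–Schmidt (Frobenius) norm `‖M‖₂ = √(Tr[Mᴴ M])`. -/
noncomputable def frobNorm {n : Type*} [Fintype n] (M : Matrix n n ℂ) : ℝ :=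
  Real.sqrt ((Mᴴ * M).trace.re)

open Classical in
/-- Real power of a Hermitian matrix, defined by functional calculus on eigenvalues
(junk value `0` on non-Hermitian input). -/
noncomputable def hpow {n : Type*} [Fintype n] [DecidableEq n] (M : Matrix n n ℂ) (r : ℝ) :
    Matrix n n ℂ :=
  if hM : M.IsHermitian then
    (hM.eigenvectorUnitary : Matrix n n ℂ) *
      Matrix.diagonal (fun i => ((hM.eigenvalues i ^ r : ℝ) : ℂ)) *
      (star (hM.eigenvectorUnitary : Matrix n n ℂ))
  else 0

/-!
Write `ξ = N Y N` with `N = σ^{1/4} ⊗ 1` and `Y = σ^{-1/4} ξ σ^{-1/4}`. For Hermitian `ξ` the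
sign of `ξ` is a unitary `U` with `|ξ| = U ξ`, so `‖ξ‖₁ = Re Tr[(N U N) Y] ≤ ‖N U N‖₂ ‖Y‖₂` by
Cauchy–Schwarz for the Hilbert–Schmidt inner product. A second Cauchy–Schwarz, with unitary
invariance of `‖·‖₂`, gives `‖N U N‖₂² = Re Tr[(Uᴴ N²)(U N²)] ≤ ‖N²‖₂²` (Hölder's
`‖N U N‖₂ ≤ ‖N‖₄²`), and `‖N²‖₂² = Tr[σ ⊗ 1] = d`.
-/

section FrobeniusNorm

variable {n : Type*} [Fintype n]

lemma trace_conjTranspose_mul_eq_inner (X Y : Matrix n n ℂ) :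
    (Xᴴ * Y).trace = inner ℂ (WithLp.toLp 2 X.vec) (WithLp.toLp 2 Y.vec) := by
  rw [EuclideanSpace.inner_toLp_toLp, dotProduct_comm, star_vec_dotProduct_vec]

lemma frobNorm_eq_norm_vec (M : Matrix n n ℂ) :
    frobNorm M = ‖(WithLp.toLp 2 M.vec : EuclideanSpace ℂ (n × n))‖ := by
  rw [frobNorm, trace_conjTranspose_mul_eq_inner, norm_eq_sqrt_re_inner (𝕜 := ℂ)]
  rfl

lemma frobNorm_nonneg (M : Matrix n n ℂ) : 0 ≤ frobNorm M := Real.sqrt_nonneg _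

lemma sq_frobNorm (M : Matrix n n ℂ) : frobNorm M ^ 2 = (Mᴴ * M).trace.re := by
  rw [frobNorm_eq_norm_vec, ← inner_self_eq_norm_sq (𝕜 := ℂ), trace_conjTranspose_mul_eq_inner]
  rfl

lemma frobNorm_conjTranspose (M : Matrix n n ℂ) : frobNorm Mᴴ = frobNorm M := by
  rw [frobNorm, frobNorm, conjTranspose_conjTranspose, trace_mul_comm]

lemma re_trace_mul_le_frobNorm_mul_frobNorm (X Y : Matrix n n ℂ) :
    (X * Y).trace.re ≤ frobNorm X * frobNorm Y := by
  rw [← frobNorm_conjTranspose X, frobNorm_eq_norm_vec, frobNorm_eq_norm_vec,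
    ← conjTranspose_conjTranspose X, trace_conjTranspose_mul_eq_inner, conjTranspose_conjTranspose]
  exact (Complex.re_le_norm _).trans (norm_inner_le_norm _ _)

variable [DecidableEq n]

lemma frobNorm_unitary_mul {U : Matrix n n ℂ} (hU : U ∈ unitaryGroup n ℂ)
    (M : Matrix n n ℂ) : frobNorm (U * M) = frobNorm M := by
  have hUU : Uᴴ * U = 1 := Unitary.star_mul_self_of_mem hU
  rw [frobNorm, frobNorm, conjTranspose_mul, mul_assoc, ← mul_assoc Uᴴ, hUU, one_mul]

lemma frobNorm_mul_unitary_mul_le {N U : Matrix n n ℂ} (hN : N.IsHermitian)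
    (hU : U ∈ unitaryGroup n ℂ) : frobNorm (N * U * N) ≤ frobNorm (N * N) := by
  have key : frobNorm (N * U * N) ^ 2 ≤ frobNorm (N * N) ^ 2 :=
    calc frobNorm (N * U * N) ^ 2 = (Uᴴ * (N * N) * (U * (N * N))).trace.re := by
          rw [sq_frobNorm, conjTranspose_mul, conjTranspose_mul, hN.eq]
          simp only [mul_assoc]
          rw [trace_mul_comm]
          simp only [mul_assoc]
      _ ≤ frobNorm (Uᴴ * (N * N)) * frobNorm (U * (N * N)) :=
          re_trace_mul_le_frobNorm_mul_frobNorm _ _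
      _ = frobNorm (N * N) ^ 2 := by
          rw [frobNorm_unitary_mul hU, ← star_eq_conjTranspose,
            frobNorm_unitary_mul (Unitary.star_mem hU), sq]
  exact (sq_le_sq₀ (frobNorm_nonneg _) (frobNorm_nonneg _)).mp key

end FrobeniusNorm

namespace Matrix

variable {n : Type*} [Fintype n] [DecidableEq n] {ξ : Matrix n n ℂ}

lemma IsHermitian.absM_eq_cfc_abs (hξ : ξ.IsHermitian) : absM ξ = cfc (fun x : ℝ => |x|) ξ := by
  have hξξ := (posSemidef_self_mul_conjTranspose ξ).1
  have habs : absM ξ = cfc Real.sqrt (ξ * ξᴴ) := by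
    rw [hξξ.cfc_eq, IsHermitian.cfc, Unitary.conjStarAlgAut_apply]
    rfl
  rw [habs, hξ.eq, ← sq, ← cfc_pow_id (R := ℝ) ξ 2 hξ.isSelfAdjoint, ← cfc_comp' _ _ ξ]
  exact cfc_congr fun x _ => Real.sqrt_sq_eq_abs x

lemma IsHermitian.exists_mem_unitaryGroup_absM_eq_mul (hξ : ξ.IsHermitian) :
    ∃ U ∈ unitaryGroup n ℂ, absM ξ = U * ξ := by
  set sgn : ℝ → ℝ := fun x => if 0 ≤ x then 1 else -1
  have hsgn : ContinuousOn sgn (spectrum ℝ ξ) := ξ.finite_real_spectrum.continuousOn sgn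
  refine ⟨cfc sgn ξ, ?_, ?_⟩
  · rw [mem_unitaryGroup_iff', (cfc_predicate sgn ξ).star_eq, ← cfc_mul _ _ ξ]
    refine (cfc_congr fun x _ => ?_).trans (cfc_const_one ℝ ξ)
    simp only [sgn]
    split_ifs <;> norm_num
  · have hmul := cfc_mul sgn (fun x => x) ξ
    rw [cfc_id' ℝ ξ] at hmul
    rw [hξ.absM_eq_cfc_abs, ← hmul]
    refine cfc_congr fun x _ => ?_
    simp only [sgn]
    split_ifs with hx
    · rw [abs_of_nonneg hx, one_mul]
    · rw [abs_of_neg (not_le.mp hx), neg_one_mul]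

variable {M : Matrix n n ℂ}

lemma IsHermitian.hpow_eq_cfc (hM : M.IsHermitian) (r : ℝ) :
    hpow M r = cfc (fun x : ℝ => x ^ r) M := by
  rw [hpow, dif_pos hM, hM.cfc_eq, IsHermitian.cfc, Unitary.conjStarAlgAut_apply]
  rfl

lemma isHermitian_hpow (M : Matrix n n ℂ) (r : ℝ) : (hpow M r).IsHermitian := by
  by_cases hM : M.IsHermitian
  · rw [hM.hpow_eq_cfc]
    exact cfc_predicate _ M
  · rw [hpow, dif_neg hM]
    exact isHermitian_zero

lemma IsHermitian.hpow_zero (hM : M.IsHermitian) : hpow M 0 = 1 := by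
  simp only [hM.hpow_eq_cfc, Real.rpow_zero, cfc_const_one ℝ M]

lemma IsHermitian.hpow_one (hM : M.IsHermitian) : hpow M 1 = M := by
  simp only [hM.hpow_eq_cfc, Real.rpow_one, cfc_id' ℝ M]

lemma PosDef.hpow_add (hM : M.PosDef) (r s : ℝ) : hpow M (r + s) = hpow M r * hpow M s := by
  rw [hM.1.hpow_eq_cfc, hM.1.hpow_eq_cfc, hM.1.hpow_eq_cfc,
    ← cfc_mul _ _ M (M.finite_real_spectrum.continuousOn _) (M.finite_real_spectrum.continuousOn _)]
  refine cfc_congr fun x hx => ?_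
  obtain ⟨i, rfl⟩ := hM.1.spectrum_real_eq_range_eigenvalues ▸ hx
  exact Real.rpow_add (hM.eigenvalues_pos i) r s

lemma IsHermitian.traceNorm_mul_mul_le {N Y : Matrix n n ℂ} (h : (N * Y * N).IsHermitian)
    (hN : N.IsHermitian) : traceNorm (N * Y * N) ≤ frobNorm (N * N) * frobNorm Y := by
  obtain ⟨U, hU, habs⟩ := h.exists_mem_unitaryGroup_absM_eq_mul
  calc traceNorm (N * Y * N) = (N * U * N * Y).trace.re := by
        rw [traceNorm, habs, ← mul_assoc, trace_mul_comm]
        simp only [mul_assoc]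
    _ ≤ frobNorm (N * U * N) * frobNorm Y := re_trace_mul_le_frobNorm_mul_frobNorm _ _
    _ ≤ frobNorm (N * N) * frobNorm Y :=
        mul_le_mul_of_nonneg_right (frobNorm_mul_unitary_mul_le hN hU) (frobNorm_nonneg Y)

end Matrix

/-- For Hermitian ξ on A⊗B and a full-rank density matrix σ on A with d = dim B,
`‖ξ‖₁ ≤ √d · ‖σ^{-1/4} ξ σ^{-1/4}‖₂`, where σ^{-1/4} acts as σ^{-1/4} ⊗ 1_B. -/
theorem traceNorm_le_sqrt_dim_mul_weighted_frobNorm {A B : Type*} [Fintype A] [DecidableEq A]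
    [Fintype B] [DecidableEq B]
    (ξ : Matrix (A × B) (A × B) ℂ) (hξ : ξ.IsHermitian)
    (σ : Matrix A A ℂ) (hσ : σ.PosDef) (hσtr : σ.trace = 1) :
    traceNorm ξ ≤ Real.sqrt (Fintype.card B) *
      frobNorm ((hpow σ (-(1/4 : ℝ)) ⊗ₖ (1 : Matrix B B ℂ)) * ξ *
        (hpow σ (-(1/4 : ℝ)) ⊗ₖ (1 : Matrix B B ℂ))) := by
  have hmul (r s : ℝ) : (hpow σ r ⊗ₖ (1 : Matrix B B ℂ)) * (hpow σ s ⊗ₖ 1) =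
      hpow σ (r + s) ⊗ₖ 1 := by
    rw [← mul_kronecker_mul, hσ.hpow_add, one_mul]
  set N := hpow σ (1/4 : ℝ) ⊗ₖ (1 : Matrix B B ℂ)
  set D := hpow σ (-(1/4 : ℝ)) ⊗ₖ (1 : Matrix B B ℂ)
  have hN : N.IsHermitian := by
    rw [IsHermitian, conjTranspose_kronecker, (isHermitian_hpow σ _).eq, conjTranspose_one]
  have hξ_eq : N * (D * ξ * D) * N = ξ := by
    have hND : N * D = 1 := by rw [hmul, add_neg_cancel, hσ.1.hpow_zero, one_kronecker_one]
    have hDN : D * N = 1 := by rw [hmul, neg_add_cancel, hσ.1.hpow_zero, one_kronecker_one]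
    rw [← mul_assoc, ← mul_assoc, hND, one_mul, mul_assoc, hDN, mul_one]
  have hNN : frobNorm (N * N) = √(Fintype.card B) := by
    have hN4 : (N * N)ᴴ * (N * N) = σ ⊗ₖ (1 : Matrix B B ℂ) := by
      rw [conjTranspose_mul, hN.eq, hmul, hmul,
        show (1/4 + 1/4 + (1/4 + 1/4) : ℝ) = 1 by norm_num, hσ.1.hpow_one]
    rw [frobNorm, hN4, trace_kronecker, hσtr, one_mul, trace_one]
    simp
  calc traceNorm ξ = traceNorm (N * (D * ξ * D) * N) := by rw [hξ_eq]
    _ ≤ frobNorm (N * N) * frobNorm (D * ξ * D) := (hξ_eq ▸ hξ).traceNorm_mul_mul_le hN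
    _ = √(Fintype.card B) * frobNorm (D * ξ * D) := by rw [hNN]
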